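/- Let 𝒳 be a coherent configuration and e_𝒳 its twin parabolic. If the quotient coherent configuration 𝒳/e_𝒳 is separable, then 𝒳 is separable. -/

import Mathlib

open Set

universe u v

variable {Ω : Type*}

/-- The diagonal relation `1_Δ` of a set `Δ ⊆ Ω`. -/
def diagRel (Δ : Set Ω) : Set (Ω × Ω) := {p | p.1 = p.2 ∧ p.1 ∈ Δ}

/-- The number of points `γ` with `(p.1, γ) ∈ r` and `(γ, p.2) ∈ s`. -/
noncomputable def interNum (r s : Set (Ω × Ω)) (p : Ω × Ω) : ℕ :=
  {γ : Ω | (p.1, γ) ∈ r ∧ (γ, p.2) ∈ s}.ncard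

/-- A coherent configuration on `Ω`: a partition `S` of `Ω × Ω` such that the diagonal
is a union of classes, `S` is closed under transposition, and the intersection numbers
are well defined. -/
structure CoherentConfiguration (Ω : Type u) where
  S : Set (Set (Ω × Ω))
  isPartition : Setoid.IsPartition S
  diag_isRelation : ∃ T ⊆ S, ⋃₀ T = diagRel (Set.univ : Set Ω)
  swap_mem : ∀ s ∈ S, {p : Ω × Ω | (p.2, p.1) ∈ s} ∈ S
  coherent : ∀ r ∈ S, ∀ s ∈ S, ∀ t ∈ S, ∀ p ∈ t, ∀ q ∈ t,
    interNum r s p = interNum r s q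

namespace CoherentConfiguration

/-- A relation of `X` is a union of basis relations of `X`. -/
def IsRelation (X : CoherentConfiguration Ω) (r : Set (Ω × Ω)) : Prop :=
  ∃ T ⊆ X.S, ⋃₀ T = r

/-- A fiber of `X` is a set `Δ` with `1_Δ` a basis relation. -/
def IsFiber (X : CoherentConfiguration Ω) (Δ : Set Ω) : Prop :=
  diagRel Δ ∈ X.S

end CoherentConfiguration

/-- `X ≤ Y` iff every relation of `X` is a relation of `Y`. -/
def CCle (X Y : CoherentConfiguration Ω) : Prop :=
  ∀ r, X.IsRelation r → Y.IsRelation r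

/-- The arc set of a graph, as a set of ordered pairs. -/
def adjRel (G : SimpleGraph Ω) : Set (Ω × Ω) := {p | G.Adj p.1 p.2}

/-- `X = WL(G)`: the smallest coherent configuration having the arc set of `G`
among its relations. -/
def IsWL (G : SimpleGraph Ω) (X : CoherentConfiguration Ω) : Prop :=
  X.IsRelation (adjRel G) ∧
    ∀ Y : CoherentConfiguration Ω, Y.IsRelation (adjRel G) → CCle X Y

/-- `X = WL(G)_π`: the smallest coherent configuration having the arc set of `G`
and every `1_Δ`, `Δ ∈ π`, among its relations. -/
def IsWLPart (G : SimpleGraph Ω) (π : Set (Set Ω)) (X : CoherentConfiguration Ω) : Prop :=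
  X.IsRelation (adjRel G) ∧ (∀ Δ ∈ π, X.IsRelation (diagRel Δ)) ∧
    ∀ Y : CoherentConfiguration Ω, Y.IsRelation (adjRel G) →
      (∀ Δ ∈ π, Y.IsRelation (diagRel Δ)) → CCle X Y

/-- A graph is distance-hereditary if in every connected induced subgraph the distance
function is the same as in the graph itself. -/
def DistanceHereditary {V : Type*} (G : SimpleGraph V) : Prop :=
  ∀ s : Set V, (G.induce s).Connected →
    ∀ u v : s, (G.induce s).dist u v = G.dist u.1 v.1

/-- Two vertices are twins in a graph if every other vertex is adjacent to both
or to neither. -/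
def IsTwin (G : SimpleGraph Ω) (a b : Ω) : Prop :=
  ∀ γ, γ ≠ a → γ ≠ b → (G.Adj γ a ↔ G.Adj γ b)

/-- Two points are `X`-twins if for every other point `γ`, the basis relation containing
`(γ, a)` coincides with the one containing `(γ, b)`. -/
def XTwin (X : CoherentConfiguration Ω) (a b : Ω) : Prop :=
  ∀ γ, γ ≠ a → γ ≠ b → ∀ s ∈ X.S, ((γ, a) ∈ s ↔ (γ, b) ∈ s)

/-- The relation `e_X` of being `X`-twins, as a set of pairs. -/
def twinRel (X : CoherentConfiguration Ω) : Set (Ω × Ω) := {p | XTwin X p.1 p.2}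

/-- An equivalence relation on `Ω`, given as a set of pairs. -/
def IsEquivSet (e : Set (Ω × Ω)) : Prop :=
  (∀ a, (a, a) ∈ e) ∧ (∀ a b, (a, b) ∈ e → (b, a) ∈ e) ∧
    (∀ a b c, (a, b) ∈ e → (b, c) ∈ e → (a, c) ∈ e)

/-- A parabolic of `X` is an equivalence relation which is a relation of `X`. -/
def IsParabolic (X : CoherentConfiguration Ω) (e : Set (Ω × Ω)) : Prop :=
  IsEquivSet e ∧ X.IsRelation e

/-- The dot product (composition) of two relations. -/
def relComp (r s : Set (Ω × Ω)) : Set (Ω × Ω) :=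
  {p | ∃ c, (p.1, c) ∈ r ∧ (c, p.2) ∈ s}

/-- An algebraic isomorphism between coherent configurations: a bijection between the
sets of basis relations preserving the intersection numbers. -/
structure AlgIso {Ω : Type u} {Ω' : Type v} (X : CoherentConfiguration Ω)
    (X' : CoherentConfiguration Ω') where
  toFun : Set (Ω × Ω) → Set (Ω' × Ω')
  bijOn : Set.BijOn toFun X.S X'.S
  card_eq : ∀ r ∈ X.S, ∀ s ∈ X.S, ∀ t ∈ X.S, ∀ p ∈ t, ∀ p' ∈ toFun t,
      interNum r s p = interNum (toFun r) (toFun s) p'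

/-- `X` is separable: every algebraic isomorphism from `X` to another coherent
configuration is induced by a bijection of the point sets. -/
def CCSeparable {Ω : Type u} (X : CoherentConfiguration Ω) : Prop :=
  ∀ (Ω' : Type u), Finite Ω' → ∀ (X' : CoherentConfiguration Ω') (φ : AlgIso X X'),
    ∃ f : Ω → Ω', Function.Bijective f ∧ ∀ s ∈ X.S, φ.toFun s = Prod.map f f '' s

/-- `Ω₋(m)`. -/
def OmegaMinus (m : Set (Ω × Ω)) : Set Ω := {a | ∃ b, (a, b) ∈ m}

/-- `Ω₊(m)`. -/
def OmegaPlus (m : Set (Ω × Ω)) : Set Ω := {b | ∃ a, (a, b) ∈ m}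

/-- A matching of `X`: an irreflexive basis relation of valency one in both directions. -/
def IsMatchingCC (X : CoherentConfiguration Ω) (m : Set (Ω × Ω)) : Prop :=
  m ∈ X.S ∧ (∀ p ∈ m, p.1 ≠ p.2) ∧
    (∀ a b c, (a, b) ∈ m → (a, c) ∈ m → b = c) ∧
    (∀ a b c, (a, c) ∈ m → (b, c) ∈ m → a = b)

/-- A pendant matching of `X` with respect to the graph `G`. -/
def IsPendantMatching (G : SimpleGraph Ω) (X : CoherentConfiguration Ω)
    (m : Set (Ω × Ω)) : Prop :=
  IsMatchingCC X m ∧ OmegaMinus m ≠ OmegaPlus m ∧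
    ∀ p ∈ m, G.Adj p.1 p.2 ∧ ∀ c, G.Adj p.1 c → c = p.2

/-- A twin matching of `X` with respect to the graph `G`. -/
def IsTwinMatching (G : SimpleGraph Ω) (X : CoherentConfiguration Ω)
    (m : Set (Ω × Ω)) : Prop :=
  IsMatchingCC X m ∧ OmegaMinus m ≠ OmegaPlus m ∧ ∀ p ∈ m, IsTwin G p.1 p.2

/-- The quotient graph of `G` modulo a (twin) equivalence relation `r`: two distinct
classes are adjacent iff every vertex of one is adjacent to every vertex of the other. -/
def quotGraph (G : SimpleGraph Ω) (r : Ω → Ω → Prop) : SimpleGraph (Quot r) where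
  Adj c d := c ≠ d ∧ ∀ a b : Ω, Quot.mk r a = c → Quot.mk r b = d → G.Adj a b
  symm := ⟨fun _ _ h => ⟨h.1.symm, fun a b ha hb => (h.2 b a hb ha).symm⟩⟩
  loopless := ⟨fun _ h => h.1 rfl⟩

/-- The restriction of a relation on `Ω` to the complement of `Δ`. -/
def restrictRel (Δ : Set Ω) (s : Set (Ω × Ω)) : Set (↥(Δᶜ) × ↥(Δᶜ)) :=
  {p | ((p.1 : Ω), (p.2 : Ω)) ∈ s}

/-- The restriction of a subset of `Ω` to the complement of `Δ`. -/
def restrictSet (Δ Γ : Set Ω) : Set ↥(Δᶜ) := {x | (x : Ω) ∈ Γ}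

/-!
Twinness of a pair is detected by the intersection numbers at that pair, so an algebraic
isomorphism `φ : 𝒳 → 𝒳'` respects twinness, fibers and the sizes of twin classes. If twins
always share a fiber, every basis relation of `𝒳/e_𝒳` is either diagonal or the image of a basis
relation of `𝒳` that is a union of products of twin classes, the classes on each side having
one common size; hence the intersection numbers of `𝒳/e_𝒳` are computed from those of `𝒳`, and
`φ` induces an algebraic isomorphism `𝒳/e_𝒳 → 𝒳'/e_𝒳'`. A bijection inducing the latter lifts,
class by class, to a bijection inducing `φ`, because the off-diagonal pairs inside the twin
classes of one fiber form a single basis relation. If some twins lie in different fibers, they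
are the only two points, every basis relation is a singleton, and `φ` is induced directly.
-/

lemma Set.ncard_preimage_eq_mul {α β : Type*} [Finite α] [Finite β] {f : α → β} {B : Set β}
    {m : ℕ} (hB : ∀ b ∈ B, (f ⁻¹' {b}).ncard = m) : (f ⁻¹' B).ncard = B.ncard * m := by
  classical
  have := Fintype.ofFinite α
  have := Fintype.ofFinite β
  rw [ncard_eq_toFinset_card', ncard_eq_toFinset_card',
    Finset.card_eq_sum_card_fiberwise (f := f) (t := B.toFinset) (fun a ha => by simpa using ha),
    Finset.sum_congr rfl (g := fun _ => m), Finset.sum_const, smul_eq_mul]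
  intro b hb
  rw [mem_toFinset] at hb
  rw [← hB b hb, ncard_eq_toFinset_card']
  congr 1
  ext a
  simp only [Finset.mem_filter, mem_toFinset, mem_preimage, mem_singleton_iff]
  exact ⟨fun h => h.2, fun h => ⟨h ▸ hb, h⟩⟩

namespace CoherentConfiguration

variable (X : CoherentConfiguration Ω)

noncomputable def relOf (p : Ω × Ω) : Set (Ω × Ω) := (X.isPartition.2 p).choose

lemma relOf_mem (p : Ω × Ω) : X.relOf p ∈ X.S := (X.isPartition.2 p).choose_spec.1.1

lemma mem_relOf (p : Ω × Ω) : p ∈ X.relOf p := (X.isPartition.2 p).choose_spec.1.2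

variable {X} {r s t : Set (Ω × Ω)} {a b : Ω}

lemma relOf_eq (hs : s ∈ X.S) {p : Ω × Ω} (hp : p ∈ s) : X.relOf p = s :=
  ((X.isPartition.2 p).choose_spec.2 s ⟨hs, hp⟩).symm

lemma mem_iff_relOf_eq (hs : s ∈ X.S) {p : Ω × Ω} : p ∈ s ↔ X.relOf p = s :=
  ⟨relOf_eq hs, fun h => h ▸ X.mem_relOf p⟩

lemma eq_of_mem (hs : s ∈ X.S) (ht : t ∈ X.S) {p : Ω × Ω} (hps : p ∈ s) (hpt : p ∈ t) :
    s = t := by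
  rw [← relOf_eq hs hps, relOf_eq ht hpt]

lemma nonempty_of_mem_S (hs : s ∈ X.S) : s.Nonempty :=
  Set.nonempty_iff_ne_empty.2 fun h => X.isPartition.1 (h ▸ hs)

lemma swap_preimage_mem (hs : s ∈ X.S) : Prod.swap ⁻¹' s ∈ X.S := X.swap_mem s hs

lemma subset_diagonal_of_mem (hs : s ∈ X.S) (ha : (a, a) ∈ s) : s ⊆ diagonal Ω := by
  obtain ⟨T, hTS, hT⟩ := X.diag_isRelation
  obtain ⟨t, htT, hat⟩ : (a, a) ∈ ⋃₀ T := hT ▸ ⟨rfl, trivial⟩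
  rw [eq_of_mem hs (hTS htT) ha hat]
  intro p hp
  exact (hT ▸ ⟨t, htT, hp⟩ : p ∈ diagRel univ).1

lemma ne_of_mem (hs : s ∈ X.S) (hd : ¬ s ⊆ diagonal Ω) (hab : (a, b) ∈ s) : a ≠ b := by
  rintro rfl
  exact hd (subset_diagonal_of_mem hs hab)

lemma interNum_pos_iff [Finite Ω] :
    0 < interNum r s (a, b) ↔ ∃ γ, (a, γ) ∈ r ∧ (γ, b) ∈ s :=
  Set.ncard_pos

/-- Twinness is read off the intersection numbers at `(a, b)`: a path `a → γ → b` avoids the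
diagonal relations iff `γ ∉ {a, b}`, and for such `γ` twinness says that its two steps lie in
mutually transposed basis relations. -/
lemma xTwin_iff [Finite Ω] : XTwin X a b ↔ ∀ u ∈ X.S, ∀ r ∈ X.S, ¬ u ⊆ diagonal Ω →
    ¬ r ⊆ diagonal Ω → Prod.swap ⁻¹' u ≠ r → interNum u r (a, b) = 0 := by
  constructor
  · intro h u hu r hr hu' hr' hur
    by_contra hne
    obtain ⟨γ, hγu, hγr⟩ := interNum_pos_iff.1 (Nat.pos_of_ne_zero hne)
    have hγa : (γ, a) ∈ r :=
      (h γ (ne_of_mem hu hu' hγu).symm (ne_of_mem hr hr' hγr) r hr).2 hγr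
    exact hur (by rw [eq_of_mem hu (swap_preimage_mem hr) hγu hγa]; rfl)
  · intro h γ hγa hγb s hs
    suffices X.relOf (γ, a) = X.relOf (γ, b) by
      rw [mem_iff_relOf_eq hs, mem_iff_relOf_eq hs, this]
    by_contra hne
    have hu := swap_preimage_mem (X.relOf_mem (γ, a))
    have hr := X.relOf_mem (γ, b)
    have hu' : ¬ Prod.swap ⁻¹' X.relOf (γ, a) ⊆ diagonal Ω := fun hd =>
      hγa (hd (show (a, γ) ∈ _ from X.mem_relOf (γ, a))).symm
    have hr' : ¬ X.relOf (γ, b) ⊆ diagonal Ω := fun hd => hγb (hd (X.mem_relOf _))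
    have hpos : 0 < interNum (Prod.swap ⁻¹' X.relOf (γ, a)) (X.relOf (γ, b)) (a, b) :=
      interNum_pos_iff.2 ⟨γ, X.mem_relOf _, X.mem_relOf _⟩
    exact hpos.ne' (h _ hu _ hr hu' hr' hne)

end CoherentConfiguration

namespace AlgIso

open CoherentConfiguration

variable {Ω' : Type*} {X : CoherentConfiguration Ω} {X' : CoherentConfiguration Ω'}

instance : CoeFun (AlgIso X X') (fun _ => Set (Ω × Ω) → Set (Ω' × Ω')) := ⟨AlgIso.toFun⟩

variable (φ : AlgIso X X') {r s t : Set (Ω × Ω)} {a b : Ω} {x y : Ω'}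

lemma map_mem (hs : s ∈ X.S) : φ s ∈ X'.S := φ.bijOn.mapsTo hs

lemma map_inj (hs : s ∈ X.S) (ht : t ∈ X.S) : φ s = φ t ↔ s = t :=
  ⟨fun h => φ.bijOn.injOn hs ht h, congrArg φ⟩

lemma exists_map_eq {s' : Set (Ω' × Ω')} (hs' : s' ∈ X'.S) : ∃ s ∈ X.S, φ s = s' :=
  φ.bijOn.surjOn hs'

lemma interNum_map (hr : r ∈ X.S) (hs : s ∈ X.S) (ht : t ∈ X.S) {p : Ω × Ω} {p' : Ω' × Ω'}
    (hp : p ∈ t) (hp' : p' ∈ φ t) : interNum (φ r) (φ s) p' = interNum r s p :=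
  (φ.card_eq r hr s hs t ht p hp p' hp').symm

def refl (X : CoherentConfiguration Ω) : AlgIso X X where
  toFun := id
  bijOn := Set.bijOn_id _
  card_eq r hr s hs t ht p hp p' hp' := X.coherent r hr s hs t ht p hp p' hp'

noncomputable def symm : AlgIso X' X where
  toFun := Function.invFunOn φ X.S
  bijOn := φ.bijOn.invOn_invFunOn.symm.bijOn (φ.bijOn.surjOn.mapsTo_invFunOn) φ.bijOn.mapsTo
  card_eq r' hr' s' hs' t' ht' p' hp' p hp := by
    have hinv := φ.bijOn.invOn_invFunOn
    have hmaps := φ.bijOn.surjOn.mapsTo_invFunOn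
    have h := φ.card_eq _ (hmaps hr') _ (hmaps hs') _ (hmaps ht') p hp p' (by rwa [hinv.2 ht'])
    rw [hinv.2 hr', hinv.2 hs'] at h
    exact h.symm

lemma symm_map (hs : s ∈ X.S) : φ.symm (φ s) = s :=
  φ.bijOn.invOn_invFunOn.1 hs

lemma map_symm {s' : Set (Ω' × Ω')} (hs' : s' ∈ X'.S) : φ (φ.symm s') = s' :=
  φ.bijOn.invOn_invFunOn.2 hs'

lemma mem_map_iff (hs : s ∈ X.S) (ht : t ∈ X.S) {p : Ω × Ω} {p' : Ω' × Ω'} (hp : p ∈ t)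
    (hp' : p' ∈ φ t) : p' ∈ φ s ↔ p ∈ s := by
  rw [mem_iff_relOf_eq (φ.map_mem hs), relOf_eq (φ.map_mem ht) hp', φ.map_inj ht hs,
    mem_iff_relOf_eq hs, relOf_eq ht hp]

lemma eq_image_of_mapsTo {f : Ω → Ω'} (hf : Function.Surjective f)
    (h : ∀ s ∈ X.S, ∀ a b, (a, b) ∈ s → (f a, f b) ∈ φ s) (hs : s ∈ X.S) :
    φ s = Prod.map f f '' s := by
  ext ⟨x, y⟩
  constructor
  · intro hxy
    obtain ⟨a, rfl⟩ := hf x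
    obtain ⟨b, rfl⟩ := hf y
    refine ⟨(a, b), ?_, rfl⟩
    exact (φ.mem_map_iff hs (X.relOf_mem _) (X.mem_relOf _)
      (h _ (X.relOf_mem (a, b)) a b (X.mem_relOf _))).1 hxy
  · rintro ⟨⟨a, b⟩, hab, ⟨⟩⟩
    exact h s hs a b hab

variable [Finite Ω] [Finite Ω']

lemma map_subset_diagonal (hs : s ∈ X.S) (hd : s ⊆ diagonal Ω) : φ s ⊆ diagonal Ω' := by
  rintro ⟨x, y⟩ hxy
  obtain ⟨⟨a, a'⟩, ha⟩ := nonempty_of_mem_S hs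
  obtain rfl : a = a' := hd ha
  obtain ⟨r, hr, hry⟩ := φ.exists_map_eq (X'.relOf_mem (y, y))
  have hpos : 0 < interNum (φ s) (φ r) (x, y) :=
    interNum_pos_iff.2 ⟨y, hxy, hry ▸ X'.mem_relOf (y, y)⟩
  rw [φ.interNum_map hs hr hs ha hxy] at hpos
  obtain ⟨γ, haγ, hγa⟩ := interNum_pos_iff.1 hpos
  obtain rfl : a = γ := hd haγ
  rw [eq_of_mem hr hs hγa ha] at hry
  exact subset_diagonal_of_mem (φ.map_mem hs) (hry ▸ X'.mem_relOf (y, y)) hxy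

lemma map_subset_diagonal_iff (hs : s ∈ X.S) : φ s ⊆ diagonal Ω' ↔ s ⊆ diagonal Ω :=
  ⟨fun h => φ.symm_map hs ▸ φ.symm.map_subset_diagonal (φ.map_mem hs) h,
    φ.map_subset_diagonal hs⟩

lemma map_relOf_fst (ht : t ∈ X.S) (hp : (a, b) ∈ t) (hp' : (x, y) ∈ φ t) :
    φ (X.relOf (a, a)) = X'.relOf (x, x) := by
  have hd := X.relOf_mem (a, a)
  have hpos : 0 < interNum (φ (X.relOf (a, a))) (φ t) (x, y) := by
    rw [φ.interNum_map hd ht ht hp hp']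
    exact interNum_pos_iff.2 ⟨a, X.mem_relOf _, hp⟩
  obtain ⟨γ, hxγ, -⟩ := interNum_pos_iff.1 hpos
  obtain rfl : x = γ :=
    φ.map_subset_diagonal hd (subset_diagonal_of_mem hd (X.mem_relOf _)) hxγ
  exact (relOf_eq (φ.map_mem hd) hxγ).symm

lemma map_relOf_snd (ht : t ∈ X.S) (hp : (a, b) ∈ t) (hp' : (x, y) ∈ φ t) :
    φ (X.relOf (b, b)) = X'.relOf (y, y) := by
  have hd := X.relOf_mem (b, b)
  have hpos : 0 < interNum (φ t) (φ (X.relOf (b, b))) (x, y) := by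
    rw [φ.interNum_map ht hd ht hp hp']
    exact interNum_pos_iff.2 ⟨b, hp, X.mem_relOf _⟩
  obtain ⟨γ, -, hγy⟩ := interNum_pos_iff.1 hpos
  obtain rfl : γ = y :=
    φ.map_subset_diagonal hd (subset_diagonal_of_mem hd (X.mem_relOf _)) hγy
  exact (relOf_eq (φ.map_mem hd) hγy).symm

lemma map_swap_preimage (hs : s ∈ X.S) : φ (Prod.swap ⁻¹' s) = Prod.swap ⁻¹' φ s := by
  obtain ⟨⟨a, b⟩, hab⟩ := nonempty_of_mem_S hs
  obtain ⟨⟨x, y⟩, hxy⟩ := nonempty_of_mem_S (φ.map_mem hs)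
  have hs' := swap_preimage_mem hs
  have hpos : 0 < interNum (φ s) (φ (Prod.swap ⁻¹' s)) (x, x) := by
    rw [φ.interNum_map hs hs' (X.relOf_mem (a, a)) (X.mem_relOf _)
      (φ.map_relOf_fst hs hab hxy ▸ X'.mem_relOf _)]
    exact interNum_pos_iff.2 ⟨b, hab, hab⟩
  obtain ⟨γ, hxγ, hγx⟩ := interNum_pos_iff.1 hpos
  exact eq_of_mem (φ.map_mem hs') (swap_preimage_mem (φ.map_mem hs)) hγx hxγ

lemma ncard_setOf_mem_map (hs : s ∈ X.S) {d : Set (Ω × Ω)} (hd : d ∈ X.S) (ha : (a, a) ∈ d)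
    (hx : (x, x) ∈ φ d) : {γ | (x, γ) ∈ φ s}.ncard = {γ | (a, γ) ∈ s}.ncard := by
  have h := φ.interNum_map hs (swap_preimage_mem hs) hd ha hx
  rw [φ.map_swap_preimage hs] at h
  simpa only [interNum, Set.mem_preimage, Prod.swap_prod_mk, and_self] using h

lemma xTwin_map (ht : t ∈ X.S) (hp : (a, b) ∈ t) (hp' : (x, y) ∈ φ t) (h : XTwin X a b) :
    XTwin X' x y := by
  rw [xTwin_iff] at h ⊢
  intro u' hu' r' hr' hu'd hr'd hur'
  obtain ⟨u, hu, rfl⟩ := φ.exists_map_eq hu'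
  obtain ⟨r, hr, rfl⟩ := φ.exists_map_eq hr'
  rw [φ.interNum_map hu hr ht hp hp']
  refine h u hu r hr (fun hd => hu'd (φ.map_subset_diagonal hu hd))
    (fun hd => hr'd (φ.map_subset_diagonal hr hd)) ?_
  rintro rfl
  exact hur' (φ.map_swap_preimage hu).symm

lemma xTwin_map_iff (ht : t ∈ X.S) (hp : (a, b) ∈ t) (hp' : (x, y) ∈ φ t) :
    XTwin X' x y ↔ XTwin X a b :=
  ⟨φ.symm.xTwin_map (φ.map_mem ht) hp' (by rwa [φ.symm_map ht]), φ.xTwin_map ht hp hp'⟩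

end AlgIso

namespace CoherentConfiguration

variable {X : CoherentConfiguration Ω} {s t : Set (Ω × Ω)} {a b c d x y γ : Ω}

variable (X) in
lemma _root_.XTwin.refl (a : Ω) : XTwin X a a :=
  fun _ _ _ _ _ => Iff.rfl

lemma _root_.XTwin.symm (h : XTwin X a b) : XTwin X b a :=
  fun γ hγb hγa s hs => (h γ hγa hγb s hs).symm

lemma _root_.XTwin.mem_left_iff (h : XTwin X a b) (hs : s ∈ X.S) (hγa : γ ≠ a) (hγb : γ ≠ b) :
    (a, γ) ∈ s ↔ (b, γ) ∈ s :=
  h γ hγa hγb _ (swap_preimage_mem hs)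

variable [Finite Ω]

lemma xTwin_of_mem (ht : t ∈ X.S) (hab : (a, b) ∈ t) (hcd : (c, d) ∈ t) (h : XTwin X a b) :
    XTwin X c d :=
  (AlgIso.refl X).xTwin_map ht hab hcd h

lemma relOf_fst_eq (ht : t ∈ X.S) (hab : (a, b) ∈ t) (hcd : (c, d) ∈ t) :
    X.relOf (a, a) = X.relOf (c, c) :=
  (AlgIso.refl X).map_relOf_fst ht hab hcd

lemma relOf_snd_eq (ht : t ∈ X.S) (hab : (a, b) ∈ t) (hcd : (c, d) ∈ t) :
    X.relOf (b, b) = X.relOf (d, d) :=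
  (AlgIso.refl X).map_relOf_snd ht hab hcd

lemma _root_.XTwin.trans (hab : XTwin X a b) (hbc : XTwin X b c) : XTwin X a c := by
  by_cases h₁ : a = b
  · exact h₁ ▸ hbc
  by_cases h₂ : a = c
  · exact h₂ ▸ XTwin.refl X a
  exact xTwin_of_mem (X.relOf_mem (a, b)) (X.mem_relOf _)
    ((hbc a h₁ h₂ _ (X.relOf_mem _)).1 (X.mem_relOf _)) hab

lemma xTwin_equivalence : Equivalence (XTwin X) :=
  ⟨XTwin.refl X, XTwin.symm, XTwin.trans⟩

lemma subset_twinRel_of_mem (hs : s ∈ X.S) (hab : (a, b) ∈ s) (h : XTwin X a b) :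
    s ⊆ twinRel X :=
  fun _ hp => xTwin_of_mem hs hab hp h

lemma not_xTwin_of_mem (hs : s ∈ X.S) (hst : ¬ s ⊆ twinRel X) (hab : (a, b) ∈ s) :
    ¬ XTwin X a b :=
  fun h => hst (subset_twinRel_of_mem hs hab h)

lemma exists_mem_of_relOf_eq (hs : s ∈ X.S) (hcd : (c, d) ∈ s)
    (h : X.relOf (a, a) = X.relOf (c, c)) : ∃ γ, (a, γ) ∈ s := by
  have hpos : 0 < interNum s (Prod.swap ⁻¹' s) (c, c) := interNum_pos_iff.2 ⟨d, hcd, hcd⟩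
  rw [X.coherent s hs _ (swap_preimage_mem hs) _ (X.relOf_mem (c, c)) (c, c) (X.mem_relOf _)
    (a, a) (h ▸ X.mem_relOf _)] at hpos
  obtain ⟨γ, haγ, -⟩ := interNum_pos_iff.1 hpos
  exact ⟨γ, haγ⟩

lemma mem_of_xTwin (hs : s ∈ X.S) (hab : (a, b) ∈ s) (hne : a ≠ b) (htw : XTwin X a b)
    (hxy : x ≠ y) (hxy' : XTwin X x y) (hx : X.relOf (x, x) = X.relOf (a, a)) : (x, y) ∈ s := by
  obtain ⟨γ, hxγ⟩ := exists_mem_of_relOf_eq hs hab hx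
  by_cases hγy : γ = y
  · exact hγy ▸ hxγ
  have hγ : XTwin X γ y := (xTwin_of_mem hs hab hxγ htw).symm.trans hxy'
  exact (hγ x (ne_of_mem hs (fun hd => hne (hd hab)) hxγ) hxy s hs).1 hxγ

lemma setOf_xTwin_eq_insert (hs : s ∈ X.S) (hab : (a, b) ∈ s) (hne : a ≠ b)
    (htw : XTwin X a b) (hc : X.relOf (c, c) = X.relOf (a, a)) :
    {y | XTwin X c y} = insert c {γ | (c, γ) ∈ s} := by
  ext y
  simp only [mem_ofPred_eq, mem_insert_iff]
  constructor
  · intro h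
    by_cases hcy : c = y
    · exact .inl hcy.symm
    · exact .inr (mem_of_xTwin hs hab hne htw hcy h hc)
  · rintro (rfl | h)
    · exact XTwin.refl X y
    · exact xTwin_of_mem hs hab h htw

variable (X) in
def TwinsSameFiber : Prop := ∀ a b, XTwin X a b → X.relOf (a, a) = X.relOf (b, b)

variable (X) in
def IsDiscrete : Prop := ∀ s ∈ X.S, s.Subsingleton

/-- A third point `γ` would put `(γ, a)` and `(γ, b)` into one basis relation, and hence the
twins `a, b` into one fiber. -/
lemma isDiscrete_of_not_twinsSameFiber (h : ¬ X.TwinsSameFiber) : X.IsDiscrete := by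
  simp only [TwinsSameFiber, not_forall] at h
  obtain ⟨a, b, hab, hne⟩ := h
  have hcover : ∀ γ, γ = a ∨ γ = b := by
    by_contra! ⟨γ, hγa, hγb⟩
    have hγb' : (γ, b) ∈ X.relOf (γ, a) := (hab γ hγa hγb _ (X.relOf_mem _)).1 (X.mem_relOf _)
    exact hne (relOf_snd_eq (X.relOf_mem _) (X.mem_relOf _) hγb')
  have hinj : ∀ c d, X.relOf (c, c) = X.relOf (d, d) → c = d := by
    intro c d hcd
    rcases hcover c with rfl | rfl <;> rcases hcover d with rfl | rfl
    exacts [rfl, absurd hcd hne, absurd hcd.symm hne, rfl]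
  intro s hs p hp q hq
  exact Prod.ext (hinj _ _ (relOf_fst_eq hs hp hq)) (hinj _ _ (relOf_snd_eq hs hp hq))

end CoherentConfiguration

namespace AlgIso

open CoherentConfiguration

variable {Ω' : Type*} [Finite Ω] [Finite Ω'] {X : CoherentConfiguration Ω}
  {X' : CoherentConfiguration Ω'}

lemma twinsSameFiber (φ : AlgIso X X') (hX : X.TwinsSameFiber) : X'.TwinsSameFiber := by
  intro x y hxy
  obtain ⟨t, ht, hty⟩ := φ.exists_map_eq (X'.relOf_mem (x, y))
  obtain ⟨⟨a, b⟩, hab⟩ := nonempty_of_mem_S ht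
  have hxy' : (x, y) ∈ φ t := hty ▸ X'.mem_relOf _
  rw [← φ.map_relOf_fst ht hab hxy', ← φ.map_relOf_snd ht hab hxy',
    hX a b ((φ.xTwin_map_iff ht hab hxy').1 hxy)]

variable (φ : AlgIso X X') {a b : Ω} {x : Ω'}

lemma ncard_setOf_xTwin_of_ne (hab : XTwin X a b) (hne : a ≠ b)
    (hx : φ (X.relOf (a, a)) = X'.relOf (x, x)) :
    {y | XTwin X' x y}.ncard = {b | XTwin X a b}.ncard := by
  have hs := X.relOf_mem (a, b)
  have hnd : ¬ X.relOf (a, b) ⊆ diagonal Ω := fun hd => hne (hd (X.mem_relOf _))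
  obtain ⟨⟨x₀, y₀⟩, hxy₀⟩ := nonempty_of_mem_S (φ.map_mem hs)
  have hx₀ : X'.relOf (x, x) = X'.relOf (x₀, x₀) :=
    hx.symm.trans (φ.map_relOf_fst hs (X.mem_relOf _) hxy₀)
  have hnd' : ¬ φ (X.relOf (a, b)) ⊆ diagonal Ω' := by rwa [φ.map_subset_diagonal_iff hs]
  have ha : a ∉ {γ | (a, γ) ∈ X.relOf (a, b)} := fun h => ne_of_mem hs hnd h rfl
  have hx' : x ∉ {γ | (x, γ) ∈ φ (X.relOf (a, b))} := fun h => ne_of_mem (φ.map_mem hs) hnd' h rfl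
  rw [setOf_xTwin_eq_insert hs (X.mem_relOf _) hne hab rfl,
    setOf_xTwin_eq_insert (φ.map_mem hs) hxy₀ (ne_of_mem (φ.map_mem hs) hnd' hxy₀)
      (φ.xTwin_map hs (X.mem_relOf _) hxy₀ hab) hx₀,
    ncard_insert_of_notMem ha, ncard_insert_of_notMem hx',
    φ.ncard_setOf_mem_map hs (X.relOf_mem _) (X.mem_relOf _) (hx ▸ X'.mem_relOf _)]

lemma ncard_setOf_xTwin (hx : φ (X.relOf (a, a)) = X'.relOf (x, x)) :
    {y | XTwin X' x y}.ncard = {b | XTwin X a b}.ncard := by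
  by_cases ha : ∃ b, XTwin X a b ∧ a ≠ b
  · obtain ⟨b, hab, hne⟩ := ha
    exact φ.ncard_setOf_xTwin_of_ne hab hne hx
  by_cases hx' : ∃ y, XTwin X' x y ∧ x ≠ y
  · obtain ⟨y, hxy, hne⟩ := hx'
    exact (φ.symm.ncard_setOf_xTwin_of_ne hxy hne (by rw [← hx, φ.symm_map (X.relOf_mem _)])).symm
  push Not at ha hx'
  have h₁ : {b | XTwin X a b} = {a} :=
    Set.ext fun b => ⟨fun h => (ha b h).symm, fun h => h ▸ XTwin.refl X a⟩
  have h₂ : {y | XTwin X' x y} = {x} :=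
    Set.ext fun y => ⟨fun h => (hx' y h).symm, fun h => h ▸ XTwin.refl X' x⟩
  rw [h₁, h₂, ncard_singleton, ncard_singleton]

lemma subsingleton_map_relOf (hX : X.IsDiscrete) (a : Ω) :
    (φ (X.relOf (a, a))).Subsingleton := by
  have hd := X.relOf_mem (a, a)
  have hdiag := φ.map_subset_diagonal hd (subset_diagonal_of_mem hd (X.mem_relOf _))
  rintro ⟨x, x'⟩ hx ⟨y, y'⟩ hy
  obtain rfl : x = x' := hdiag hx
  obtain rfl : y = y' := hdiag hy
  obtain ⟨t, ht, hty⟩ := φ.exists_map_eq (X'.relOf_mem (x, y))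
  obtain ⟨⟨b, c⟩, hbc⟩ := nonempty_of_mem_S ht
  have hxy : (x, y) ∈ φ t := hty ▸ X'.mem_relOf _
  have hb : X.relOf (b, b) = X.relOf (a, a) := by
    rw [← φ.map_inj (X.relOf_mem _) hd, φ.map_relOf_fst ht hbc hxy, relOf_eq (φ.map_mem hd) hx]
  have hc : X.relOf (c, c) = X.relOf (a, a) := by
    rw [← φ.map_inj (X.relOf_mem _) hd, φ.map_relOf_snd ht hbc hxy, relOf_eq (φ.map_mem hd) hy]
  obtain rfl : b = a := congrArg Prod.fst (hX _ hd (hb ▸ X.mem_relOf (b, b)) (X.mem_relOf _))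
  obtain rfl : c = b := congrArg Prod.fst (hX _ hd (hc ▸ X.mem_relOf (c, c)) (X.mem_relOf _))
  obtain rfl : x = y := φ.map_subset_diagonal ht (subset_diagonal_of_mem ht hbc) hxy
  rfl

lemma exists_induced_of_isDiscrete (hX : X.IsDiscrete) :
    ∃ f : Ω → Ω', Function.Bijective f ∧ ∀ s ∈ X.S, φ s = Prod.map f f '' s := by
  have hdiag : ∀ a, φ (X.relOf (a, a)) ⊆ diagonal Ω' := fun a =>
    φ.map_subset_diagonal (X.relOf_mem _) (subset_diagonal_of_mem (X.relOf_mem _) (X.mem_relOf _))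
  have hex : ∀ a, ∃ x, (x, x) ∈ φ (X.relOf (a, a)) := fun a => by
    obtain ⟨⟨x, x'⟩, hx⟩ := nonempty_of_mem_S (φ.map_mem (X.relOf_mem (a, a)))
    obtain rfl : x = x' := hdiag a hx
    exact ⟨x, hx⟩
  choose f hf using hex
  have hfst : ∀ {t a b x y}, t ∈ X.S → (a, b) ∈ t → (x, y) ∈ φ t → x = f a := by
    intro t a b x y ht hab hxy
    have hx : (x, x) ∈ φ (X.relOf (a, a)) := φ.map_relOf_fst ht hab hxy ▸ X'.mem_relOf _
    exact congrArg Prod.fst (φ.subsingleton_map_relOf hX a hx (hf a))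
  have hsnd : ∀ {t a b x y}, t ∈ X.S → (a, b) ∈ t → (x, y) ∈ φ t → y = f b := by
    intro t a b x y ht hab hxy
    have hy : (y, y) ∈ φ (X.relOf (b, b)) := φ.map_relOf_snd ht hab hxy ▸ X'.mem_relOf _
    exact congrArg Prod.fst (φ.subsingleton_map_relOf hX b hy (hf b))
  have hsurj : Function.Surjective f := fun x => by
    obtain ⟨t, ht, htx⟩ := φ.exists_map_eq (X'.relOf_mem (x, x))
    obtain ⟨⟨a, b⟩, hab⟩ := nonempty_of_mem_S ht
    exact ⟨a, (hfst ht hab (htx ▸ X'.mem_relOf _)).symm⟩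
  have hinj : Function.Injective f := fun a b hab => by
    have hd : X.relOf (a, a) = X.relOf (b, b) :=
      (φ.map_inj (X.relOf_mem _) (X.relOf_mem _)).1 (eq_of_mem (φ.map_mem (X.relOf_mem _))
        (φ.map_mem (X.relOf_mem _)) (hf a) (hab ▸ hf b))
    exact congrArg Prod.fst (hX _ (X.relOf_mem _) (X.mem_relOf _) (hd ▸ X.mem_relOf (b, b)))
  refine ⟨f, ⟨hinj, hsurj⟩, fun s hs => φ.eq_image_of_mapsTo hsurj (fun s hs a b hab => ?_) hs⟩
  obtain ⟨⟨x, y⟩, hxy⟩ := nonempty_of_mem_S (φ.map_mem hs)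
  rwa [← hfst hs hab hxy, ← hsnd hs hab hxy]

end AlgIso

namespace CoherentConfiguration

variable (X : CoherentConfiguration Ω)

def quotRel (s : Set (Ω × Ω)) : Set (Quot (XTwin X) × Quot (XTwin X)) :=
  Prod.map (Quot.mk (XTwin X)) (Quot.mk (XTwin X)) '' s

variable {X} {r s : Set (Ω × Ω)} {a b c d : Ω}

lemma mk_mem_quotRel (h : (a, b) ∈ s) : (Quot.mk _ a, Quot.mk _ b) ∈ X.quotRel s := ⟨(a, b), h, rfl⟩

variable [Finite Ω]

lemma mk_eq_mk_iff : Quot.mk (XTwin X) a = Quot.mk (XTwin X) b ↔ XTwin X a b :=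
  Quot.eq.trans xTwin_equivalence.eqvGen_iff

lemma mk_mem_quotRel_iff_of_not_subset (hs : s ∈ X.S) (hst : ¬ s ⊆ twinRel X) :
    (Quot.mk _ a, Quot.mk _ b) ∈ X.quotRel s ↔ (a, b) ∈ s := by
  refine ⟨?_, mk_mem_quotRel⟩
  rintro ⟨⟨a', b'⟩, hab', he⟩
  simp only [Prod.map, Prod.mk.injEq, mk_eq_mk_iff] at he
  obtain ⟨ha, hb⟩ := he
  have hnt := not_xTwin_of_mem hs hst hab'
  have ha'b : a' ≠ b := by
    rintro rfl
    exact hnt hb.symm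
  have hab : (a', b) ∈ s := (hb a' (fun h => hnt (h ▸ XTwin.refl X a')) ha'b s hs).1 hab'
  have hba : b ≠ a := by
    rintro rfl
    exact not_xTwin_of_mem hs hst hab ha
  exact (ha.mem_left_iff hs ha'b.symm hba).1 hab

lemma mk_mem_quotRel_iff_of_subset (hX : X.TwinsSameFiber) (hs : s ∈ X.S)
    (hst : s ⊆ twinRel X) (hcd : (c, d) ∈ s) :
    (Quot.mk _ a, Quot.mk _ b) ∈ X.quotRel s ↔ XTwin X a b ∧ X.relOf (a, a) = X.relOf (c, c) := by
  constructor
  · rintro ⟨⟨a', b'⟩, hab', he⟩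
    simp only [Prod.map, Prod.mk.injEq, mk_eq_mk_iff] at he
    exact ⟨he.1.symm.trans ((hst hab').trans he.2),
      (hX _ _ he.1).symm.trans (relOf_fst_eq hs hab' hcd)⟩
  · rintro ⟨hab, ha⟩
    obtain ⟨γ, haγ⟩ := exists_mem_of_relOf_eq hs hcd ha
    refine ⟨(a, γ), haγ, ?_⟩
    simp only [Prod.map, Prod.mk.injEq, mk_eq_mk_iff, true_and]
    exact (hst haγ).symm.trans hab

lemma quotRel_eq_of_mk_mem (hX : X.TwinsSameFiber) (hs : s ∈ X.S)
    (h : (Quot.mk _ a, Quot.mk _ b) ∈ X.quotRel s) : X.quotRel s = X.quotRel (X.relOf (a, b)) := by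
  by_cases hst : s ⊆ twinRel X
  · obtain ⟨⟨c, d⟩, hcd⟩ := nonempty_of_mem_S hs
    obtain ⟨hab, ha⟩ := (mk_mem_quotRel_iff_of_subset hX hs hst hcd).1 h
    have ht := X.relOf_mem (a, b)
    have htt := subset_twinRel_of_mem ht (X.mem_relOf _) hab
    ext ⟨θ, θ'⟩
    obtain ⟨x, rfl⟩ := Quot.exists_rep θ
    obtain ⟨y, rfl⟩ := Quot.exists_rep θ'
    rw [mk_mem_quotRel_iff_of_subset hX hs hst hcd,
      mk_mem_quotRel_iff_of_subset hX ht htt (X.mem_relOf _), ha]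
  · rw [relOf_eq hs ((mk_mem_quotRel_iff_of_not_subset hs hst).1 h)]

open Classical in
lemma interNum_quotRel_of_subset_left (hX : X.TwinsSameFiber) (hr : r ∈ X.S)
    (hrt : r ⊆ twinRel X) (hcd : (c, d) ∈ r) :
    interNum (X.quotRel r) (X.quotRel s) (Quot.mk _ a, Quot.mk _ b) =
      if X.relOf (a, a) = X.relOf (c, c) ∧ (Quot.mk _ a, Quot.mk _ b) ∈ X.quotRel s
      then 1 else 0 := by
  have h : {θ | (Quot.mk _ a, θ) ∈ X.quotRel r ∧ (θ, Quot.mk _ b) ∈ X.quotRel s} =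
      {θ | θ = Quot.mk _ a ∧ (X.relOf (a, a) = X.relOf (c, c) ∧
        (Quot.mk _ a, Quot.mk _ b) ∈ X.quotRel s)} := by
    ext θ
    obtain ⟨γ, rfl⟩ := Quot.exists_rep θ
    simp only [mem_ofPred_eq, mk_mem_quotRel_iff_of_subset hX hr hrt hcd, mk_eq_mk_iff]
    constructor
    · rintro ⟨⟨haγ, ha⟩, hγb⟩
      exact ⟨haγ.symm, ha, mk_eq_mk_iff.2 haγ ▸ hγb⟩
    · rintro ⟨hγa, ha, hab⟩
      exact ⟨⟨hγa.symm, ha⟩, mk_eq_mk_iff.2 hγa ▸ hab⟩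
  rw [interNum, h]
  split_ifs with hc <;> simp [hc]

open Classical in
lemma interNum_quotRel_of_subset_right (hX : X.TwinsSameFiber) (hs : s ∈ X.S)
    (hst : s ⊆ twinRel X) (hcd : (c, d) ∈ s) :
    interNum (X.quotRel r) (X.quotRel s) (Quot.mk _ a, Quot.mk _ b) =
      if X.relOf (b, b) = X.relOf (c, c) ∧ (Quot.mk _ a, Quot.mk _ b) ∈ X.quotRel r
      then 1 else 0 := by
  have h : {θ | (Quot.mk _ a, θ) ∈ X.quotRel r ∧ (θ, Quot.mk _ b) ∈ X.quotRel s} =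
      {θ | θ = Quot.mk _ b ∧ (X.relOf (b, b) = X.relOf (c, c) ∧
        (Quot.mk _ a, Quot.mk _ b) ∈ X.quotRel r)} := by
    ext θ
    obtain ⟨γ, rfl⟩ := Quot.exists_rep θ
    simp only [mem_ofPred_eq, mk_mem_quotRel_iff_of_subset hX hs hst hcd, mk_eq_mk_iff]
    constructor
    · rintro ⟨haγ, hγb, hγ⟩
      exact ⟨hγb, hX γ b hγb ▸ hγ, mk_eq_mk_iff.2 hγb ▸ haγ⟩
    · rintro ⟨hγb, hb, hab⟩
      exact ⟨mk_eq_mk_iff.2 hγb ▸ hab, hγb, hX γ b hγb ▸ hb⟩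
  rw [interNum, h]
  split_ifs with hc <;> simp [hc]

lemma interNum_quotRel_mul_ncard (hr : r ∈ X.S) (hs : s ∈ X.S) (hrt : ¬ r ⊆ twinRel X)
    (hst : ¬ s ⊆ twinRel X) (hcd : (c, d) ∈ r) :
    interNum (X.quotRel r) (X.quotRel s) (Quot.mk _ a, Quot.mk _ b) * {y | XTwin X d y}.ncard =
      interNum r s (a, b) := by
  have hpre : {γ | (a, γ) ∈ r ∧ (γ, b) ∈ s} = Quot.mk (XTwin X) ⁻¹'
      {θ | (Quot.mk _ a, θ) ∈ X.quotRel r ∧ (θ, Quot.mk _ b) ∈ X.quotRel s} := by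
    ext γ
    simp only [mem_preimage, mem_ofPred_eq, mk_mem_quotRel_iff_of_not_subset hr hrt,
      mk_mem_quotRel_iff_of_not_subset hs hst]
  rw [interNum, interNum, hpre, Set.ncard_preimage_eq_mul]
  rintro θ ⟨haθ, -⟩
  obtain ⟨γ, rfl⟩ := Quot.exists_rep θ
  rw [mk_mem_quotRel_iff_of_not_subset hr hrt] at haθ
  have hcls : Quot.mk (XTwin X) ⁻¹' {Quot.mk _ γ} = {y | XTwin X γ y} :=
    Set.ext fun y => mk_eq_mk_iff.trans ⟨XTwin.symm, XTwin.symm⟩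
  rw [hcls]
  exact (AlgIso.refl X).ncard_setOf_xTwin (relOf_snd_eq hr hcd haθ)

end CoherentConfiguration

namespace AlgIso

open CoherentConfiguration

variable {Ω' : Type*} [Finite Ω] [Finite Ω'] {X : CoherentConfiguration Ω}
  {X' : CoherentConfiguration Ω'} (φ : AlgIso X X') {r s t : Set (Ω × Ω)} {a b : Ω} {x y : Ω'}

lemma map_subset_twinRel_iff (hs : s ∈ X.S) : φ s ⊆ twinRel X' ↔ s ⊆ twinRel X := by
  obtain ⟨⟨a, b⟩, hab⟩ := nonempty_of_mem_S hs
  obtain ⟨⟨x, y⟩, hxy⟩ := nonempty_of_mem_S (φ.map_mem hs)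
  constructor
  · exact fun h => subset_twinRel_of_mem hs hab ((φ.xTwin_map_iff hs hab hxy).1 (h hxy))
  · exact fun h => subset_twinRel_of_mem (φ.map_mem hs) hxy (φ.xTwin_map hs hab hxy (h hab))

lemma mk_mem_quotRel_map_iff (hX : X.TwinsSameFiber) (hX' : X'.TwinsSameFiber)
    (hs : s ∈ X.S) (ht : t ∈ X.S) (hp : (a, b) ∈ t)
    (hp' : (x, y) ∈ φ t) :
    (Quot.mk _ x, Quot.mk _ y) ∈ X'.quotRel (φ s) ↔ (Quot.mk _ a, Quot.mk _ b) ∈ X.quotRel s := by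
  by_cases hst : s ⊆ twinRel X
  · obtain ⟨⟨c, d⟩, hcd⟩ := nonempty_of_mem_S hs
    obtain ⟨⟨c', d'⟩, hcd'⟩ := nonempty_of_mem_S (φ.map_mem hs)
    rw [mk_mem_quotRel_iff_of_subset hX' (φ.map_mem hs) ((φ.map_subset_twinRel_iff hs).2 hst) hcd',
      mk_mem_quotRel_iff_of_subset hX hs hst hcd, φ.xTwin_map_iff ht hp hp',
      ← φ.map_relOf_fst ht hp hp', ← φ.map_relOf_fst hs hcd hcd',
      φ.map_inj (X.relOf_mem _) (X.relOf_mem _)]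
  · rw [mk_mem_quotRel_iff_of_not_subset (φ.map_mem hs) (mt (φ.map_subset_twinRel_iff hs).1 hst),
      mk_mem_quotRel_iff_of_not_subset hs hst, φ.mem_map_iff hs ht hp hp']

lemma quotRel_map_eq (hX : X.TwinsSameFiber) (hX' : X'.TwinsSameFiber)
    (hs : s ∈ X.S) (ht : t ∈ X.S) (h : X.quotRel s = X.quotRel t) :
    X'.quotRel (φ s) = X'.quotRel (φ t) := by
  ext ⟨θ, θ'⟩
  obtain ⟨x, rfl⟩ := Quot.exists_rep θ
  obtain ⟨y, rfl⟩ := Quot.exists_rep θ'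
  obtain ⟨u, hu, hux⟩ := φ.exists_map_eq (X'.relOf_mem (x, y))
  obtain ⟨⟨a, b⟩, hab⟩ := nonempty_of_mem_S hu
  have hxy : (x, y) ∈ φ u := hux ▸ X'.mem_relOf _
  rw [φ.mk_mem_quotRel_map_iff hX hX' hs hu hab hxy, φ.mk_mem_quotRel_map_iff hX hX' ht hu hab hxy,
    h]

open Classical in
lemma interNum_quotRel_map (hX : X.TwinsSameFiber) (hX' : X'.TwinsSameFiber)
    (hr : r ∈ X.S) (hs : s ∈ X.S) (ht : t ∈ X.S) (hp : (a, b) ∈ t)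
    (hp' : (x, y) ∈ φ t) :
    interNum (X'.quotRel (φ r)) (X'.quotRel (φ s)) (Quot.mk _ x, Quot.mk _ y) =
      interNum (X.quotRel r) (X.quotRel s) (Quot.mk _ a, Quot.mk _ b) := by
  obtain ⟨⟨c, d⟩, hcd⟩ := nonempty_of_mem_S hr
  obtain ⟨⟨c', d'⟩, hcd'⟩ := nonempty_of_mem_S (φ.map_mem hr)
  by_cases hrt : r ⊆ twinRel X
  · rw [interNum_quotRel_of_subset_left hX' (φ.map_mem hr) ((φ.map_subset_twinRel_iff hr).2 hrt)
        hcd', interNum_quotRel_of_subset_left hX hr hrt hcd,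
      φ.mk_mem_quotRel_map_iff hX hX' hs ht hp hp', ← φ.map_relOf_fst ht hp hp',
      ← φ.map_relOf_fst hr hcd hcd']
    exact if_congr (and_congr (φ.map_inj (X.relOf_mem _) (X.relOf_mem _)) Iff.rfl) rfl rfl
  obtain ⟨⟨e, f⟩, hef⟩ := nonempty_of_mem_S hs
  obtain ⟨⟨e', f'⟩, hef'⟩ := nonempty_of_mem_S (φ.map_mem hs)
  by_cases hst : s ⊆ twinRel X
  · rw [interNum_quotRel_of_subset_right hX' (φ.map_mem hs) ((φ.map_subset_twinRel_iff hs).2 hst)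
        hef', interNum_quotRel_of_subset_right hX hs hst hef,
      φ.mk_mem_quotRel_map_iff hX hX' hr ht hp hp', ← φ.map_relOf_snd ht hp hp',
      ← φ.map_relOf_fst hs hef hef']
    exact if_congr (and_congr (φ.map_inj (X.relOf_mem _) (X.relOf_mem _)) Iff.rfl) rfl rfl
  have h := interNum_quotRel_mul_ncard hr hs hrt hst hcd (a := a) (b := b)
  have h' := interNum_quotRel_mul_ncard (φ.map_mem hr) (φ.map_mem hs)
    (mt (φ.map_subset_twinRel_iff hr).1 hrt) (mt (φ.map_subset_twinRel_iff hs).1 hst) hcd'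
    (a := x) (b := y)
  rw [φ.interNum_map hr hs ht hp hp', ← h, φ.ncard_setOf_xTwin (φ.map_relOf_snd hr hcd hcd')] at h'
  exact Nat.eq_of_mul_eq_mul_right ((ncard_pos (toFinite _)).2 ⟨d, XTwin.refl X d⟩) h'

end AlgIso

namespace CoherentConfiguration

variable {X : CoherentConfiguration Ω} [Finite Ω]

variable (X) in
def twinQuotient (hX : X.TwinsSameFiber) : CoherentConfiguration (Quot (XTwin X)) where
  S := X.quotRel '' X.S
  isPartition := by
    refine ⟨?_, ?_⟩
    · rintro ⟨s, hs, hempty⟩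
      exact ((nonempty_of_mem_S hs).image _).ne_empty hempty
    · rintro ⟨θ, θ'⟩
      obtain ⟨a, rfl⟩ := Quot.exists_rep θ
      obtain ⟨b, rfl⟩ := Quot.exists_rep θ'
      refine ⟨X.quotRel (X.relOf (a, b)),
        ⟨⟨_, X.relOf_mem _, rfl⟩, mk_mem_quotRel (X.mem_relOf _)⟩, ?_⟩
      rintro _ ⟨⟨s, hs, rfl⟩, h⟩
      exact quotRel_eq_of_mk_mem hX hs h
  diag_isRelation := by
    refine ⟨X.quotRel '' {d ∈ X.S | d ⊆ diagonal Ω}, image_mono (sep_subset _ _), ?_⟩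
    ext ⟨θ, θ'⟩
    obtain ⟨a, rfl⟩ := Quot.exists_rep θ
    obtain ⟨b, rfl⟩ := Quot.exists_rep θ'
    constructor
    · rintro ⟨_, ⟨d, ⟨-, hdd⟩, rfl⟩, ⟨⟨a', b'⟩, hab', he⟩⟩
      obtain rfl : a' = b' := hdd hab'
      rw [← he]
      exact ⟨rfl, trivial⟩
    · rintro ⟨h, -⟩
      refine ⟨_, ⟨X.relOf (a, a), ⟨X.relOf_mem _,
        subset_diagonal_of_mem (X.relOf_mem _) (X.mem_relOf _)⟩, rfl⟩, ?_⟩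
      rw [← show Quot.mk (XTwin X) a = Quot.mk (XTwin X) b from h]
      exact mk_mem_quotRel (X.mem_relOf _)
  swap_mem := by
    rintro _ ⟨s, hs, rfl⟩
    refine ⟨Prod.swap ⁻¹' s, swap_preimage_mem hs, ?_⟩
    ext ⟨θ, θ'⟩
    constructor
    · rintro ⟨⟨a, b⟩, hab, ⟨⟩⟩
      exact ⟨(b, a), hab, rfl⟩
    · rintro ⟨⟨a, b⟩, hab, ⟨⟩⟩
      exact ⟨(b, a), hab, rfl⟩
  coherent := by
    rintro _ ⟨r, hr, rfl⟩ _ ⟨s, hs, rfl⟩ _ ⟨t, ht, rfl⟩ _ ⟨⟨a, b⟩, hab, rfl⟩ _ ⟨⟨c, d⟩, hcd, rfl⟩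
    exact ((AlgIso.refl X).interNum_quotRel_map hX hX hr hs ht hab hcd).symm

end CoherentConfiguration

namespace AlgIso

open CoherentConfiguration

variable {Ω' : Type*} [Finite Ω] [Finite Ω'] {X : CoherentConfiguration Ω}
  {X' : CoherentConfiguration Ω'} (φ : AlgIso X X') {s : Set (Ω × Ω)}

-- The choice of `s` is irrelevant by `quotRel_map_eq`; the value `∅` off `X.quotRel '' X.S`
-- is never used.
open Classical in
noncomputable def quotientMap (R : Set (Quot (XTwin X) × Quot (XTwin X))) :
    Set (Quot (XTwin X') × Quot (XTwin X')) :=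
  if h : ∃ s ∈ X.S, X.quotRel s = R then X'.quotRel (φ h.choose) else ∅

lemma quotientMap_quotRel (hX : X.TwinsSameFiber) (hX' : X'.TwinsSameFiber)
    (hs : s ∈ X.S) : φ.quotientMap (X.quotRel s) = X'.quotRel (φ s) := by
  have h : ∃ t ∈ X.S, X.quotRel t = X.quotRel s := ⟨s, hs, rfl⟩
  rw [quotientMap, dif_pos h]
  exact φ.quotRel_map_eq hX hX' h.choose_spec.1 hs h.choose_spec.2

noncomputable def quotient (hX : X.TwinsSameFiber) (hX' : X'.TwinsSameFiber)
    (Q : CoherentConfiguration (Quot (XTwin X)))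
    (hQ : Q.S = X.quotRel '' X.S) : AlgIso Q (X'.twinQuotient hX') where
  toFun := φ.quotientMap
  bijOn := by
    rw [hQ]
    refine ⟨?_, ?_, ?_⟩
    · rintro _ ⟨s, hs, rfl⟩
      rw [φ.quotientMap_quotRel hX hX' hs]
      exact ⟨_, φ.map_mem hs, rfl⟩
    · rintro _ ⟨s, hs, rfl⟩ _ ⟨t, ht, rfl⟩ h
      rw [φ.quotientMap_quotRel hX hX' hs, φ.quotientMap_quotRel hX hX' ht] at h
      simpa only [φ.symm_map hs, φ.symm_map ht] using
        φ.symm.quotRel_map_eq hX' hX (φ.map_mem hs) (φ.map_mem ht) h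
    · rintro _ ⟨s', hs', rfl⟩
      refine ⟨_, ⟨_, φ.symm.map_mem hs', rfl⟩, ?_⟩
      rw [φ.quotientMap_quotRel hX hX' (φ.symm.map_mem hs'), φ.map_symm hs']
  card_eq := by
    rw [hQ]
    rintro _ ⟨r, hr, rfl⟩ _ ⟨s, hs, rfl⟩ _ ⟨t, ht, rfl⟩ _ ⟨⟨a, b⟩, hab, rfl⟩ P' hP'
    rw [φ.quotientMap_quotRel hX hX' ht] at hP'
    obtain ⟨⟨x, y⟩, hxy, rfl⟩ := hP'
    rw [φ.quotientMap_quotRel hX hX' hr, φ.quotientMap_quotRel hX hX' hs]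
    exact (φ.interNum_quotRel_map hX hX' hr hs ht hab hxy).symm

variable {fb : Quot (XTwin X) → Quot (XTwin X')}

lemma map_relOf_eq_of_quotRel (hX' : X'.TwinsSameFiber)
    (h : ∀ s ∈ X.S, X'.quotRel (φ s) = Prod.map fb fb '' X.quotRel s) {a : Ω} {x : Ω'}
    (hax : fb (Quot.mk _ a) = Quot.mk _ x) : φ (X.relOf (a, a)) = X'.relOf (x, x) := by
  have hd := X.relOf_mem (a, a)
  have hmem : (Quot.mk _ x, Quot.mk _ x) ∈ X'.quotRel (φ (X.relOf (a, a))) := by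
    rw [h _ hd, ← hax]
    exact ⟨_, mk_mem_quotRel (X.mem_relOf _), rfl⟩
  obtain ⟨⟨c, c'⟩, hc, he⟩ := hmem
  simp only [Prod.map, Prod.mk.injEq, mk_eq_mk_iff] at he
  obtain rfl : c = c' :=
    φ.map_subset_diagonal hd (subset_diagonal_of_mem hd (X.mem_relOf _)) hc
  rw [← hX' c x he.1, relOf_eq (φ.map_mem hd) hc]

lemma exists_equiv_of_quotRel (hX' : X'.TwinsSameFiber) (hfb : Function.Bijective fb)
    (h : ∀ s ∈ X.S, X'.quotRel (φ s) = Prod.map fb fb '' X.quotRel s) :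
    ∃ e : Ω ≃ Ω', ∀ a, Quot.mk _ (e a) = fb (Quot.mk _ a) := by
  have hcard : ∀ θ', Nat.card {a // fb (Quot.mk _ a) = θ'} =
      Nat.card {x // Quot.mk (XTwin X') x = θ'} := by
    intro θ'
    obtain ⟨x, rfl⟩ := Quot.exists_rep θ'
    obtain ⟨θ, hθ⟩ := hfb.2 (Quot.mk _ x)
    obtain ⟨a, rfl⟩ := Quot.exists_rep θ
    calc Nat.card {a' // fb (Quot.mk _ a') = Quot.mk _ x}
        = Nat.card {a' | XTwin X a a'} := Nat.card_congr <| Equiv.subtypeEquivRight fun a' => by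
          rw [← hθ, hfb.1.eq_iff, mk_eq_mk_iff]
          exact ⟨XTwin.symm, XTwin.symm⟩
      _ = Nat.card {y | XTwin X' x y} := by
          rw [Nat.card_coe_set_eq, Nat.card_coe_set_eq,
            φ.ncard_setOf_xTwin (φ.map_relOf_eq_of_quotRel hX' h hθ)]
      _ = Nat.card {y // Quot.mk (XTwin X') y = Quot.mk _ x} :=
          Nat.card_congr <| Equiv.subtypeEquivRight fun y => by
            rw [mk_eq_mk_iff]
            exact ⟨XTwin.symm, XTwin.symm⟩
  exact ⟨Equiv.ofFiberEquiv fun θ' => (Finite.card_eq.1 (hcard θ')).some,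
    Equiv.ofFiberEquiv_map _⟩

lemma exists_induced_of_quotRel (hX' : X'.TwinsSameFiber) (hfb : Function.Bijective fb)
    (h : ∀ s ∈ X.S, X'.quotRel (φ s) = Prod.map fb fb '' X.quotRel s) :
    ∃ f : Ω → Ω', Function.Bijective f ∧ ∀ s ∈ X.S, φ s = Prod.map f f '' s := by
  obtain ⟨e, he⟩ := φ.exists_equiv_of_quotRel hX' hfb h
  refine ⟨e, e.bijective, fun s hs => φ.eq_image_of_mapsTo e.surjective (fun s hs a b hab => ?_) hs⟩
  by_cases hst : s ⊆ twinRel X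
  · by_cases hab' : a = b
    · subst hab'
      rw [← relOf_eq hs hab, φ.map_relOf_eq_of_quotRel hX' h (he a).symm]
      exact X'.mem_relOf _
    obtain ⟨⟨x, y⟩, hxy⟩ := nonempty_of_mem_S (φ.map_mem hs)
    have hnd : ¬ φ s ⊆ diagonal Ω' := by
      rw [φ.map_subset_diagonal_iff hs]
      exact fun hd => hab' (hd hab)
    refine mem_of_xTwin (φ.map_mem hs) hxy (ne_of_mem (φ.map_mem hs) hnd hxy)
      (φ.xTwin_map hs hab hxy (hst hab)) (e.injective.ne hab') ?_ ?_
    · rw [← mk_eq_mk_iff, he, he, mk_eq_mk_iff.2 (hst hab)]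
    · rw [← φ.map_relOf_eq_of_quotRel hX' h (he a).symm, φ.map_relOf_fst hs hab hxy]
  · have hm : (Quot.mk _ (e a), Quot.mk _ (e b)) ∈ X'.quotRel (φ s) := by
      rw [he, he, h s hs]
      exact ⟨_, mk_mem_quotRel hab, rfl⟩
    exact (mk_mem_quotRel_iff_of_not_subset (φ.map_mem hs)
      (mt (φ.map_subset_twinRel_iff hs).1 hst)).1 hm

end AlgIso

/-- if the quotient `X/e_X` of a coherent configuration `X` modulo its
twin parabolic is separable, then `X` is separable. -/
theorem stmt_15 {Ω : Type u} [Fintype Ω] (X : CoherentConfiguration Ω)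
    (Q : CoherentConfiguration (Quot (XTwin X)))
    (hQ : Q.S = (fun s => Prod.map (Quot.mk (XTwin X)) (Quot.mk (XTwin X)) '' s) '' X.S)
    (hsep : CCSeparable Q) :
    CCSeparable X := by
  intro Ω' _ X' φ
  by_cases hX : X.TwinsSameFiber
  · have hX' := φ.twinsSameFiber hX
    obtain ⟨fb, hfb, hψ⟩ := hsep _ inferInstance _ (φ.quotient hX hX' Q hQ)
    refine φ.exists_induced_of_quotRel hX' hfb fun s hs => ?_
    rw [← φ.quotientMap_quotRel hX hX' hs]
    exact hψ _ (hQ ▸ mem_image_of_mem _ hs)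
  · exact φ.exists_induced_of_isDiscrete (CoherentConfiguration.isDiscrete_of_not_twinsSameFiber hX)
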